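/- arXiv:2111.03714 — 2 statements merged into one kernel-verified Lean document; each statement's English description precedes it below -/
import Mathlib

section
/- Let a, b and n > 3 be positive integers, set a_m = r_b(n) + a·r_b(m-1) for 1 ≤ m ≤ n, and fix i with 1 ≤ i ≤ n. For j ∈ {1,…,n-2} and k ∈ {j+1,…,n-1}, the monomial x_j^b·x_{k+1} is strictly smaller than x_{j+1}·x_k^b with respect to the order ≺_i if and only if i ≤ j or k+1 ≤ i. -/
/-- The ℓ-th repunit in base `b`: `r_b(ℓ) = ∑_{j=0}^{ℓ-1} b^j`, with `r_b(0) = 0`. -/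
def rep (b ℓ : ℕ) : ℕ := ∑ j ∈ Finset.range ℓ, b ^ j

/-- `a_m = r_b(n) + a · r_b(m-1)`. -/
def aseq (a b n m : ℕ) : ℕ := rep b n + a * rep b (m - 1)

/-- Rank of the (0-indexed) variable `m` (i.e. `x_{m+1}` in 1-indexed notation) for the
variable ordering `x_i ≺ x_{i-1} ≺ ⋯ ≺ x_1 ≺ x_n ≺ ⋯ ≺ x_{i+1}` (here `i` is 1-indexed);
smaller rank means smaller variable. -/
def rankv (n i : ℕ) (m : Fin n) : ℕ :=
  if (m : ℕ) + 1 ≤ i then i - ((m : ℕ) + 1) else i + (n - ((m : ℕ) + 1))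

/-- The `A`-weighted degree of an exponent vector. -/
def wdeg (a b n : ℕ) (u : Fin n → ℕ) : ℕ := ∑ m : Fin n, u m * aseq a b n ((m : ℕ) + 1)

/-- The `A`-graded reverse lexicographic order `≺_i` (with `x_i` smallest) on exponent
vectors: `u ≺_i v` iff the weighted degree of `u` is smaller, or the weighted degrees agree
and the smallest variable in which `u` and `v` differ has strictly larger exponent in `u`. -/
def prec (a b n i : ℕ) (u v : Fin n → ℕ) : Prop :=
  wdeg a b n u < wdeg a b n v ∨
    (wdeg a b n u = wdeg a b n v ∧
      ∃ m : Fin n, v m < u m ∧ ∀ m' : Fin n, rankv n i m' < rankv n i m → u m' = v m')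

/-- The exponent vector of the monomial `x_m^e` (with `m` 1-indexed). -/
def sgl (n m e : ℕ) : Fin n → ℕ := fun m' => if (m' : ℕ) + 1 = m then e else 0


lemma rep_succ (b ℓ : ℕ) : rep b (ℓ + 1) = b * rep b ℓ + 1 := by
  unfold rep
  rw [Finset.sum_range_succ']
  simp [pow_succ, ← Finset.sum_mul, Finset.mul_sum, mul_comm]

lemma wdeg_add (a b n : ℕ) (u v : Fin n → ℕ) :
    wdeg a b n (u + v) = wdeg a b n u + wdeg a b n v := by
  unfold wdeg
  simp [add_mul, Finset.sum_add_distrib]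

lemma wdeg_sgl (a b n m e : ℕ) (h1 : 1 ≤ m) (h2 : m ≤ n) :
    wdeg a b n (sgl n m e) = e * aseq a b n m := by
  unfold wdeg sgl
  rw [Finset.sum_eq_single (⟨m - 1, by omega⟩ : Fin n)]
  · simp only [Fin.val_mk]
    rw [if_pos (by omega), show m - 1 + 1 = m by omega]
  · intro c _ hc
    rw [if_neg, zero_mul]
    intro h
    exact hc (by apply Fin.ext; simp; omega)
  · intro h
    exact absurd (Finset.mem_univ _) h

theorem stmt3 (a b n : ℕ) (ha : 0 < a) (hb : 0 < b) (hn : 3 < n)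
    (i : ℕ) (hi1 : 1 ≤ i) (hi2 : i ≤ n)
    (j k : ℕ) (hj1 : 1 ≤ j) (hj2 : j ≤ n - 2) (hk1 : j + 1 ≤ k) (hk2 : k ≤ n - 1) :
    prec a b n i (sgl n j b + sgl n (k + 1) 1) (sgl n (j + 1) 1 + sgl n k b) ↔
      (i ≤ j ∨ k + 1 ≤ i) := by
  have hn4 : 4 ≤ n := by omega
  have hjn : j + 2 ≤ n := by omega
  have hkn : k + 1 ≤ n := by omega
  have hwd : wdeg a b n (sgl n j b + sgl n (k + 1) 1) =
      wdeg a b n (sgl n (j + 1) 1 + sgl n k b) := by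
    rw [wdeg_add, wdeg_add, wdeg_sgl a b n j b (by omega) (by omega),
        wdeg_sgl a b n (k + 1) 1 (by omega) (by omega),
        wdeg_sgl a b n (j + 1) 1 (by omega) (by omega),
        wdeg_sgl a b n k b (by omega) (by omega)]
    have hrj : rep b j = b * rep b (j - 1) + 1 := by
      conv_lhs => rw [show j = (j - 1) + 1 by omega]
      exact rep_succ b (j - 1)
    have hrk : rep b k = b * rep b (k - 1) + 1 := by
      conv_lhs => rw [show k = (k - 1) + 1 by omega]
      exact rep_succ b (k - 1)
    unfold aseq
    rw [show (k + 1) - 1 = k by omega, show (j + 1) - 1 = j by omega, hrj, hrk]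
    ring
  unfold prec
  rw [hwd]
  simp only [lt_self_iff_false, false_or, eq_self_iff_true, true_and]
  constructor
  · rintro ⟨m, hlt, hall⟩
    by_contra hc
    push_neg at hc
    obtain ⟨hij, hik⟩ := hc
    have hm : (m : ℕ) + 1 = j ∨ (m : ℕ) + 1 = k + 1 := by
      by_contra h
      push_neg at h
      simp only [Pi.add_apply, sgl, if_neg h.1, if_neg h.2] at hlt
      split_ifs at hlt <;> omega
    rcases Nat.lt_or_ge i k with hik' | hik'
    · have h1 := hall ⟨j, by omega⟩ (by
        simp only [rankv, Fin.val_mk]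
        rcases hm with h | h <;> split_ifs <;> omega)
      simp only [Pi.add_apply, sgl, Fin.val_mk] at h1
      split_ifs at h1 <;> omega
    · have h1 := hall ⟨k - 1, by omega⟩ (by
        simp only [rankv, Fin.val_mk]
        rcases hm with h | h <;> split_ifs <;> omega)
      simp only [Pi.add_apply, sgl, Fin.val_mk] at h1
      split_ifs at h1 <;> omega
  · intro hcond
    by_cases hij : i = j
    · refine ⟨⟨j - 1, by omega⟩, ?_, ?_⟩
      · simp only [Pi.add_apply, sgl, Fin.val_mk]
        split_ifs <;> omega
      · intro m' hr
        have hm'n : (m' : ℕ) < n := m'.isLt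
        simp only [rankv, Fin.val_mk] at hr
        split_ifs at hr <;> omega
    · have hcase : i < j ∨ k + 1 ≤ i := by omega
      refine ⟨⟨k, by omega⟩, ?_, ?_⟩
      · simp only [Pi.add_apply, sgl, Fin.val_mk]
        split_ifs <;> omega
      · intro m' hr
        have hm'n : (m' : ℕ) < n := m'.isLt
        simp only [rankv, Fin.val_mk] at hr
        simp only [Pi.add_apply, sgl]
        split_ifs at hr <;> split_ifs <;> omega
end

section
/- Let a, b and n > 3 be positive integers, set a_m = r_b(n) + a·r_b(m-1) for 1 ≤ m ≤ n, fix i with 1 ≤ i ≤ n, and let k be a field. Let I_2(Y) ⊆ k[x_1,…,x_n] be the ideal generated by the 2×2 minors of Y. Then the set of these minors is a Gröbner basis of I_2(Y) with respect to ≺_i: for every nonzero f ∈ I_2(Y), there exist j, k with 1 ≤ j < k ≤ n-1 such that the ≺_i-leading monomial of the minor x_{j+1}·x_k^b − x_j^b·x_{k+1} divides the ≺_i-leading monomial of f. -/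
/-- `u` is the `≺_i`-leading exponent (monomial) of `f`: it appears in `f` with nonzero
coefficient and every other exponent of `f` is `≺_i`-smaller. -/
def IsLead {K : Type*} [Field K] (a b n i : ℕ) (f : MvPolynomial (Fin n) K)
    (u : Fin n →₀ ℕ) : Prop :=
  u ∈ f.support ∧ ∀ v ∈ f.support, v ≠ u →
    prec a b n i (fun m => v m) (fun m => u m)

/-- The variable `x_m` (1-indexed, `1 ≤ m ≤ n`) of `K[x_1, …, x_n]`. -/
noncomputable def xv (K : Type*) [Field K] (n m : ℕ) : MvPolynomial (Fin n) K :=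
  if h : m - 1 < n then MvPolynomial.X ⟨m - 1, h⟩ else 0

/-- The set of 2×2 minors of the matrix `Y` with rows `(x_1^b, …, x_{n-1}^b)` and
`(x_2, …, x_n)`, i.e. the binomials `x_{j+1}·x_l^b − x_j^b·x_{l+1}` for `1 ≤ j < l ≤ n-1`. -/
def minorsY (K : Type*) [Field K] (b n : ℕ) : Set (MvPolynomial (Fin n) K) :=
  { f | ∃ j l : ℕ, 1 ≤ j ∧ j < l ∧ l ≤ n - 1 ∧
      f = xv K n (j + 1) * xv K n l ^ b - xv K n j ^ b * xv K n (l + 1) }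

/-!
Let `L ⊆ ℤⁿ` be the lattice spanned by the exponent differences of the minors. Grading
`k[x]` by `ℤⁿ / L` makes every minor homogeneous, so the leading exponent `u` of `f` shares
its degree with a second exponent `v` of `f`; then `v ≺_i u` and `d = u - v ∈ L`.
Writing `d_p = δ_{p-1} - b δ_p` with `δ_p = z_p - z_{p-1}` for an integer potential `z`
vanishing at `0` and at `n - 1` (the minor `(j, l)` has potential the indicator of `[j, l)`),
the `A`-degree of `d` is `0`, so the `≺_i`-first nonzero coordinate of `d` is negative.
A discrete maximum principle for `z` finds a minor whose leading exponent is at most `d⁺ ≤ u`: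
a descent of `z` left of `i` together with an ascent right of `i` gives a minor whose leading
term is `x_j^b x_{l+1}`, and a strict local maximum plateau of `z` not straddling `i` gives
one whose leading term is `x_{j+1} x_l^b`.
-/

namespace MvPolynomial

theorem exists_mem_support_ne_of_mem_span_binomials {σ R M : Type*} [CommRing R]
    [AddCommMonoid M] (φ : (σ →₀ ℕ) →+ M) {G : Set (MvPolynomial σ R)}
    (hG : ∀ g ∈ G, ∃ α β, φ α = φ β ∧ g = monomial α 1 - monomial β 1)
    {f : MvPolynomial σ R} (hf : f ∈ Ideal.span G) {u : σ →₀ ℕ} (hu : u ∈ f.support) :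
    ∃ v ∈ f.support, v ≠ u ∧ φ v = φ u := by
  classical
  let Φ : MvPolynomial σ R →+* AddMonoidAlgebra R M := AddMonoidAlgebra.mapDomainRingHom R φ
  have hker : Ideal.span G ≤ RingHom.ker Φ := by
    rw [Ideal.span_le]
    rintro g hg
    obtain ⟨α, β, hαβ, rfl⟩ := hG g hg
    rw [SetLike.mem_coe, RingHom.mem_ker, map_sub]
    simp [Φ, monomial, hαβ]
  by_contra! hc
  have hcoeff : (Φ f).coeff (φ u) = f.coeff u := by
    simp only [Φ, AddMonoidAlgebra.mapDomainRingHom_apply, AddMonoidAlgebra.coeff_mapDomain,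
      Finsupp.mapDomain, Finsupp.sum_apply, Finsupp.single_apply]
    refine (Finset.sum_eq_single u (fun v hv hvu => if_neg (hc v hv hvu)) ?_).trans (if_pos rfl)
    intro h; simp_all
  rw [hker hf, AddMonoidAlgebra.coeff_zero] at hcoeff
  exact mem_support_iff.mp hu hcoeff.symm

lemma mem_support_monomial_sub_monomial {σ R : Type*} [CommRing R] [Nontrivial R]
    {α β w : σ →₀ ℕ} (h : α ≠ β) :
    w ∈ (monomial α (1 : R) - monomial β 1).support ↔ w = α ∨ w = β := by
  classical
  simp only [mem_support_iff, coeff_sub, coeff_monomial]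
  split_ifs <;> simp_all [eq_comm]

end MvPolynomial

namespace GroebnerMinors

open MvPolynomial

-- Positions `p` of exponent vectors are 1-indexed: `p` stands for `x_p`.

def jump (z : ℕ → ℤ) (p : ℕ) : ℤ := z p - z (p - 1)

def expDiff (b : ℕ) (z : ℕ → ℤ) (p : ℕ) : ℤ := jump z (p - 1) - b * jump z p

def IsPotential (n : ℕ) (z : ℕ → ℤ) : Prop := z 0 = 0 ∧ ∀ k, n - 1 ≤ k → z k = 0

/-- `x_{j+1} x_l^b` divides `x^D`. -/
def AntiDiagLE (b : ℕ) (D : ℕ → ℤ) (j l : ℕ) : Prop :=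
  (j + 1 < l ∧ 1 ≤ D (j + 1) ∧ b ≤ D l) ∨ (j + 1 = l ∧ b + 1 ≤ D l)

/-- `x_j^b x_{l+1}` divides `x^D`. -/
def DiagLE (b : ℕ) (D : ℕ → ℤ) (j l : ℕ) : Prop := b ≤ D j ∧ 1 ≤ D (l + 1)

/-- The `≺_i`-leading term of the minor `(j, l)` divides `x^D`. -/
def LeadLE (b i : ℕ) (D : ℕ → ℤ) (j l : ℕ) : Prop :=
  if j + 1 ≤ i ∧ i ≤ l then DiagLE b D j l else AntiDiagLE b D j l

/-- `rankv n i m = varRank n i (m + 1)` holds by definition. -/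
def varRank (n i p : ℕ) : ℕ := if p ≤ i then i - p else i + (n - p)

section Potential

variable {b : ℕ} {z : ℕ → ℤ}

@[simp] lemma jump_zero : jump z 0 = 0 := sub_self _

lemma expDiff_succ (p : ℕ) : expDiff b z (p + 1) = jump z p - b * jump z (p + 1) := rfl

lemma sum_expDiff_mul_eq_zero {n : ℕ} (hz : IsPotential n z) {A : ℕ → ℤ} {c : ℤ}
    (hA : ∀ p, 1 ≤ p → A (p + 1) - b * A p = c) :
    ∑ m ∈ Finset.range n, expDiff b z (m + 1) * A (m + 1) = 0 := by
  have hjA : ∀ p, jump z p * (A (p + 1) - b * A p) = c * jump z p := fun p => by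
    rcases p with _ | p
    · simp
    · rw [hA _ p.succ_pos, mul_comm]
  have hparts : ∀ N, ∑ m ∈ Finset.range N, expDiff b z (m + 1) * A (m + 1)
      = c * z (N - 1) - b * jump z N * A N := by
    intro N
    induction N with
    | zero => simp [hz.1]
    | succ N ih =>
      rw [Finset.sum_range_succ, ih, expDiff_succ]
      have := hjA N
      rcases N with _ | N
      · simp [hz.1]
      · simp only [jump, Nat.add_sub_cancel] at this ⊢
        linear_combination this
  rw [hparts, hz.2 _ le_rfl, jump, hz.2 n (Nat.sub_le n 1), hz.2 _ le_rfl]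
  ring

lemma exists_jump_descent {a c : ℕ} (hac : a < c) (ha : 0 ≤ jump z a) (hz : z c < z a) :
    ∃ k, a < k ∧ k ≤ c ∧ 0 ≤ jump z (k - 1) ∧ jump z k < 0 := by
  obtain ⟨d, rfl⟩ : ∃ d, c = a + d + 1 := ⟨c - a - 1, by omega⟩
  induction d generalizing a with
  | zero => exact ⟨a + 1, by omega, le_rfl, ha, by simp only [jump]; simpa using hz⟩
  | succ d ih =>
    by_cases h : jump z (a + 1) < 0
    · exact ⟨a + 1, by omega, by omega, ha, h⟩
    · have hz' : z (a + 1 + d + 1) < z (a + 1) := by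
        simp only [jump, Nat.add_sub_cancel] at h
        rw [show a + 1 + d + 1 = a + (d + 1) + 1 by omega]; linarith
      obtain ⟨k, h1, h2, h3⟩ := ih (not_lt.mp h) (by omega) hz'
      exact ⟨k, by omega, by omega, h3⟩

lemma exists_jump_ascent {a c : ℕ} (hac : a < c) (hc : jump z (c + 1) ≤ 0) (hz : z a < z c) :
    ∃ k, a < k ∧ k ≤ c ∧ 0 < jump z k ∧ jump z (k + 1) ≤ 0 := by
  induction c, hac using Nat.le_induction with
  | base => exact ⟨a + 1, by omega, le_rfl, by simp only [jump]; simpa using hz, hc⟩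
  | succ c hac ih =>
    by_cases h : 0 < jump z (c + 1)
    · exact ⟨c + 1, by omega, le_rfl, h, hc⟩
    · have hz' : z a < z c := by simp only [jump, Nat.add_sub_cancel] at h; linarith
      obtain ⟨k, h1, h2, h3⟩ := ih (not_lt.mp h) hz'
      exact ⟨k, h1, by omega, h3⟩

lemma le_expDiff_of_descent {k : ℕ} (h1 : 0 ≤ jump z (k - 1)) (h2 : jump z k < 0) :
    (b : ℤ) ≤ expDiff b z k := by
  unfold expDiff; nlinarith

lemma one_le_expDiff_of_ascent {k : ℕ} (h1 : 0 < jump z k) (h2 : jump z (k + 1) ≤ 0) :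
    1 ≤ expDiff b z (k + 1) := by
  rw [expDiff_succ]; nlinarith

lemma add_one_le_expDiff_of_peak {k : ℕ} (h1 : 0 < jump z k) (h2 : jump z (k + 1) < 0) :
    (b : ℤ) + 1 ≤ expDiff b z (k + 1) := by
  rw [expDiff_succ]; nlinarith

lemma jump_nonpos_of_expDiff_eq_zero {a c : ℕ}
    (hD : ∀ q, a < q → q ≤ c → expDiff b z q = 0) (hc : jump z c ≤ 0)
    {q : ℕ} (haq : a ≤ q) (hqc : q ≤ c) : jump z q ≤ 0 := by
  induction hqc using Nat.decreasingInduction with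
  | self => exact hc
  | of_succ q hqc ih =>
    have h := hD (q + 1) (by omega) hqc
    rw [expDiff_succ] at h
    nlinarith [ih (by omega)]

lemma le_of_jump_nonpos {a c : ℕ} (hac : a ≤ c)
    (h : ∀ q, a < q → q ≤ c → jump z q ≤ 0) :
    z c ≤ z a := by
  induction c, hac using Nat.le_induction with
  | base => exact le_rfl
  | succ c hac ih =>
    have := h (c + 1) (by omega) le_rfl
    simp only [jump, Nat.add_sub_cancel] at this
    linarith [ih fun q h1 h2 => h q h1 (by omega)]

lemma eq_zero_of_expDiff_eq_zero (hb : 1 ≤ b) (hz0 : z 0 = 0) {c : ℕ}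
    (hD : ∀ q, 1 ≤ q → q ≤ c → expDiff b z q = 0) {q : ℕ} (hqc : q ≤ c) :
    z q = 0 := by
  suffices ∀ q ≤ c, z q = 0 ∧ jump z q = 0 from (this q hqc).1
  intro q hqc
  induction q with
  | zero => simp [hz0]
  | succ q ih =>
    obtain ⟨hzq, hjq⟩ := ih (by omega)
    have h := hD (q + 1) (by omega) hqc
    rw [expDiff_succ, hjq, zero_sub, neg_eq_zero, mul_eq_zero] at h
    have hj : jump z (q + 1) = 0 := h.resolve_left (by exact_mod_cast (by omega : b ≠ 0))
    refine ⟨?_, hj⟩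
    simp only [jump, Nat.add_sub_cancel] at hj
    linarith

lemma exists_antiDiagLE_of_peak {lo hi k : ℕ} (hlo : 1 ≤ lo) (hk : lo ≤ k ∧ k ≤ hi)
    (hleft : z (lo - 1) < z k) (hright : z (hi + 1) < z k) :
    ∃ j l, lo ≤ j ∧ j < l ∧ l ≤ hi + 1 ∧ AntiDiagLE b (expDiff b z) j l := by
  classical
  obtain ⟨k₀, hk₀, hmax⟩ :=
    (Finset.Icc lo hi).exists_max_image z ⟨k, Finset.mem_Icc.2 hk⟩
  have hM : ∀ q, lo ≤ q → q ≤ hi → z q ≤ z k₀ := fun q h1 h2 =>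
    hmax q (Finset.mem_Icc.2 ⟨h1, h2⟩)
  have hkM := hM k hk.1 hk.2
  set S := (Finset.Icc lo hi).filter (fun q => z q = z k₀)
  have hS : S.Nonempty := ⟨k₀, Finset.mem_filter.2 ⟨hk₀, rfl⟩⟩
  have memS : ∀ {q}, q ∈ S ↔ (lo ≤ q ∧ q ≤ hi) ∧ z q = z k₀ := by
    simp [S, Finset.mem_filter, Finset.mem_Icc]
  obtain ⟨⟨hj1, hj2⟩, hjM⟩ := memS.1 (S.min'_mem hS)
  obtain ⟨⟨hl1, hl2⟩, hlM⟩ := memS.1 (S.max'_mem hS)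
  -- the first and the last maximiser of `z` on `[lo, hi]`
  set j := S.min' hS
  set l := S.max' hS
  have hjl : j ≤ l := S.min'_le _ (S.max'_mem hS)
  have hjump_j : 0 < jump z j := by
    suffices z (j - 1) < z k₀ by simp only [jump]; linarith
    rcases Nat.eq_or_lt_of_le hj1 with h | h
    · rw [← h]; linarith
    · refine lt_of_le_of_ne (hM (j - 1) (by omega) (by omega)) fun he => ?_
      have := S.min'_le _ (memS.2 ⟨⟨by omega, by omega⟩, he⟩)
      omega
  have hjump_l : jump z (l + 1) < 0 := by
    suffices z (l + 1) < z k₀ by simp only [jump, Nat.add_sub_cancel]; linarith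
    rcases Nat.eq_or_lt_of_le hl2 with h | h
    · rw [h]; linarith
    · refine lt_of_le_of_ne (hM (l + 1) (by omega) (by omega)) fun he => ?_
      have := S.le_max' _ (memS.2 ⟨⟨by omega, by omega⟩, he⟩)
      omega
  rcases Nat.eq_or_lt_of_le hjl with he | hlt
  · refine ⟨j, j + 1, hj1, by omega, by omega, Or.inr ⟨rfl, ?_⟩⟩
    rw [he] at hjump_j ⊢
    exact add_one_le_expDiff_of_peak hjump_j hjump_l
  · refine ⟨j, l + 1, hj1, by omega, by omega, Or.inl ⟨by omega, ?_, ?_⟩⟩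
    · refine one_le_expDiff_of_ascent hjump_j ?_
      have := hM (j + 1) (by omega) (by omega)
      simp only [jump, Nat.add_sub_cancel]; linarith
    · refine le_expDiff_of_descent ?_ hjump_l
      have := hM (l - 1) (by omega) (by omega)
      simp only [jump, Nat.add_sub_cancel]; linarith

lemma exists_diagLE_of_neg {n i : ℕ} (hz : IsPotential n z) (hneg : z (i - 1) < 0) :
    ∃ j l, 1 ≤ j ∧ j + 1 ≤ i ∧ i ≤ l ∧ l ≤ n - 1 ∧
      DiagLE b (expDiff b z) j l := by
  obtain ⟨hz0, hzn⟩ := hz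
  have hin : i < n := by by_contra h; linarith [hzn (i - 1) (by omega)]
  obtain ⟨j, hj0, hji, hj⟩ := exists_jump_descent (z := z) (a := 0) (c := i - 1)
    (by by_contra h; simp_all [show i - 1 = 0 by omega]) (by simp) (by rwa [hz0])
  obtain ⟨l, hil, hln, hl⟩ := exists_jump_ascent (z := z) (a := i - 1) (c := n - 1) (by omega)
    (by simp [jump, hzn (n - 1 + 1) (by omega), hzn (n - 1) le_rfl]) (by rwa [hzn _ le_rfl])
  exact ⟨j, l, hj0, by omega, by omega, hln,
    le_expDiff_of_descent hj.1 hj.2, one_le_expDiff_of_ascent hl.1 hl.2⟩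

lemma exists_drop_left {n i : ℕ} (hb : 1 ≤ b) (hin : i ≤ n) (hz : IsPotential n z)
    {ps : ℕ} (hpsn : ps ≤ n) (hneg : expDiff b z ps < 0)
    (hlow : ∀ q, 1 ≤ q → q ≤ n → varRank n i q < varRank n i ps → expDiff b z q = 0)
    (hnonneg : 0 ≤ z (i - 1))
    (hbelow : ∀ k, i - 1 ≤ k → k ≤ n - 1 → z k ≤ z (i - 1)) :
    ∃ k, 1 ≤ k ∧ k + 1 ≤ i - 1 ∧ 0 < z k ∧ z (k + 1) < z k := by
  obtain ⟨hz0, hzn⟩ := hz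
  -- the positions in `(ps, c]` precede `ps` in the order `≺_i`, so `d` vanishes there
  set c := if ps ≤ i then i else n with hc
  have hDc : ∀ q, ps < q → q ≤ c → expDiff b z q = 0 := fun q h1 h2 =>
    hlow q (by omega) (by split_ifs at hc <;> omega)
      (by unfold varRank; split_ifs at hc ⊢ <;> omega)
  have hjc : jump z c ≤ 0 := by
    rcases (show c = n ∨ (c = i ∧ i < n) by split_ifs at hc <;> omega) with h | ⟨h, hi'⟩
    · simp [h, jump, hzn n (by omega), hzn (n - 1) le_rfl]
    · rw [h]; simp only [jump]; linarith [hbelow i (by omega) (by omega)]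
  have hdrop : jump z (ps - 1) < 0 := by
    have := jump_nonpos_of_expDiff_eq_zero hDc hjc le_rfl (by split_ifs at hc <;> omega)
    unfold expDiff at hneg; nlinarith
  have hps2 : 2 ≤ ps := by by_contra h; simp_all [show ps - 1 = 0 by omega]
  have hmono : z (c - 1) ≤ z (ps - 1) := le_of_jump_nonpos (by split_ifs at hc <;> omega)
    fun q h1 h2 => jump_nonpos_of_expDiff_eq_zero hDc hjc (by omega) (by omega)
  have hpeak : z (ps - 1) < z (ps - 2) := by
    simp only [jump, show ps - 1 - 1 = ps - 2 by omega] at hdrop; linarith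
  by_cases hpsi : ps ≤ i
  · rw [if_pos hpsi] at hc
    rw [hc] at hmono
    refine ⟨ps - 2, ?_, by omega, by linarith, by rwa [show ps - 2 + 1 = ps - 1 by omega]⟩
    by_contra h
    rw [show ps - 2 = 0 by omega, hz0] at hpeak
    linarith
  · rw [if_neg hpsi] at hc
    rw [hc, hzn _ le_rfl] at hmono
    have hzi : z (i - 1) = 0 := eq_zero_of_expDiff_eq_zero hb hz0 (c := i)
      (fun q h1 h2 => hlow q h1 (by omega) (by unfold varRank; split_ifs; omega)) (by omega)
    linarith [hbelow (ps - 2) (by omega) (by omega)]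

theorem exists_leadLE {n i : ℕ} (hb : 1 ≤ b) (hi : 1 ≤ i) (hin : i ≤ n)
    (hz : IsPotential n z) {ps : ℕ} (hpsn : ps ≤ n) (hneg : expDiff b z ps < 0)
    (hlow : ∀ q, 1 ≤ q → q ≤ n → varRank n i q < varRank n i ps → expDiff b z q = 0) :
    ∃ j l, 1 ≤ j ∧ j < l ∧ l ≤ n - 1 ∧ LeadLE b i (expDiff b z) j l := by
  by_cases hdip : z (i - 1) < 0
  · obtain ⟨j, l, hj, hji, hil, hl, hle⟩ := exists_diagLE_of_neg hz hdip
    exact ⟨j, l, hj, by omega, hl, by rw [LeadLE, if_pos ⟨hji, hil⟩]; exact hle⟩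
  have hzn := hz.2
  by_cases hright : ∃ k, i ≤ k ∧ k ≤ n - 2 ∧ z (i - 1) < z k ∧ 0 < z k
  · obtain ⟨k, hik, hkn, hk1, hk2⟩ := hright
    obtain ⟨j, l, hij, hjl, hl, hle⟩ := exists_antiDiagLE_of_peak (b := b) hi ⟨hik, hkn⟩ hk1
      (by rwa [hzn _ (by omega)])
    exact ⟨j, l, by omega, hjl, by omega, by rw [LeadLE, if_neg (by omega)]; exact hle⟩
  push Not at hdip hright
  have hbelow : ∀ k, i - 1 ≤ k → k ≤ n - 1 → z k ≤ z (i - 1) := by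
    intro k h1 h2
    by_cases hk : k = n - 1
    · rw [hk, hzn _ le_rfl]; exact hdip
    rcases Nat.eq_or_lt_of_le h1 with rfl | h1
    · exact le_rfl
    by_contra! h
    linarith [hright k (by omega) (by omega) h]
  obtain ⟨k, hk, hki, hk0, hk1⟩ := exists_drop_left hb hin hz hpsn hneg hlow hdip hbelow
  obtain ⟨j, l, hj, hjl, hl, hle⟩ := exists_antiDiagLE_of_peak (b := b) le_rfl ⟨hk, le_rfl⟩
    (by rwa [Nat.sub_self, hz.1]) hk1
  exact ⟨j, l, hj, hjl, by omega, by rw [LeadLE, if_neg (by omega)]; exact hle⟩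

end Potential

/-- The exponent of `x_p`, mirroring `xv`. -/
noncomputable def ev (n p : ℕ) : Fin n →₀ ℕ :=
  if h : p - 1 < n then Finsupp.single ⟨p - 1, h⟩ 1 else 0

/-- The exponent of `x_{j+1} x_l^b`. -/
noncomputable def antiDiagExp (b n j l : ℕ) : Fin n →₀ ℕ := ev n (j + 1) + b • ev n l

/-- The exponent of `x_j^b x_{l+1}`. -/
noncomputable def diagExp (b n j l : ℕ) : Fin n →₀ ℕ := b • ev n j + ev n (l + 1)

noncomputable def leadExp (b n i j l : ℕ) : Fin n →₀ ℕ :=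
  if j + 1 ≤ i ∧ i ≤ l then diagExp b n j l else antiDiagExp b n j l

noncomputable def trailExp (b n i j l : ℕ) : Fin n →₀ ℕ :=
  if j + 1 ≤ i ∧ i ≤ l then antiDiagExp b n j l else diagExp b n j l

section Minor

variable {b n j l : ℕ}

lemma ev_apply {p : ℕ} (hp : 1 ≤ p) (m : Fin n) :
    ev n p m = if (m : ℕ) + 1 = p then 1 else 0 := by
  unfold ev
  split_ifs with h1 h2 h2
  · simp [Finsupp.single_apply, Fin.ext_iff]; omega
  · simp [Finsupp.single_apply, Fin.ext_iff]; omega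
  · omega
  · rfl

lemma xv_eq_monomial (K : Type*) [Field K] {p : ℕ} (hp : p - 1 < n) :
    xv K n p = monomial (ev n p) 1 := by
  simp [xv, ev, hp, X]

lemma minor_eq (K : Type*) [Field K] (hjl : j < l) (hl : l ≤ n - 1) :
    xv K n (j + 1) * xv K n l ^ b - xv K n j ^ b * xv K n (l + 1) =
      monomial (antiDiagExp b n j l) 1 - monomial (diagExp b n j l) 1 := by
  rw [xv_eq_monomial K (p := j + 1) (by omega), xv_eq_monomial K (p := l) (by omega),
    xv_eq_monomial K (p := j) (by omega), xv_eq_monomial K (p := l + 1) (by omega),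
    monomial_pow, monomial_pow, monomial_mul, monomial_mul, one_pow, mul_one]
  rfl

lemma antiDiagExp_apply (hjl : j < l) (m : Fin n) :
    antiDiagExp b n j l m =
      (if (m : ℕ) = j then 1 else 0) + if (m : ℕ) + 1 = l then b else 0 := by
  simp [antiDiagExp, ev_apply (show 1 ≤ j + 1 by omega), ev_apply (show 1 ≤ l by omega)]

lemma diagExp_apply (hj : 1 ≤ j) (m : Fin n) :
    diagExp b n j l m = (if (m : ℕ) + 1 = j then b else 0) + if (m : ℕ) = l then 1 else 0 := by
  simp [diagExp, ev_apply hj, ev_apply (show 1 ≤ l + 1 by omega)]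

lemma antiDiagExp_sub_diagExp (hj : 1 ≤ j) (hjl : j < l) (m : Fin n) :
    (antiDiagExp b n j l m : ℤ) - diagExp b n j l m =
      expDiff b (Set.indicator (Set.Ico j l) 1) (m + 1) := by
  rw [antiDiagExp_apply hjl, diagExp_apply hj]
  simp only [expDiff, jump, Set.indicator_apply, Set.mem_Ico, Pi.one_apply, Nat.add_sub_cancel]
  split_ifs <;> push_cast <;> omega

lemma isPotential_indicator (hj : 1 ≤ j) (hl : l ≤ n - 1) :
    IsPotential n (Set.indicator (Set.Ico j l) 1) :=
  ⟨by simp; omega, fun k hk => by simp; omega⟩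

lemma antiDiagExp_ne_diagExp (hj : 1 ≤ j) (hjl : j < l) (hl : l ≤ n - 1) :
    antiDiagExp b n j l ≠ diagExp b n j l := by
  intro h
  have := DFunLike.congr_fun h ⟨l, by omega⟩
  rw [antiDiagExp_apply hjl, diagExp_apply hj] at this
  simp [show l + 1 ≠ j by omega] at this
  omega

lemma leadExp_le {i : ℕ} (hj : 1 ≤ j) (hjl : j < l) {D : ℕ → ℤ} {u : Fin n →₀ ℕ}
    (hD : ∀ m : Fin n, D (m + 1) ≤ u m) (h : LeadLE b i D j l) (m : Fin n) :
    leadExp b n i j l m ≤ u m := by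
  have hm := hD m
  unfold leadExp
  unfold LeadLE DiagLE AntiDiagLE at h
  split_ifs at h ⊢
  · rw [diagExp_apply hj]
    split_ifs <;> subst_vars <;> omega
  · rw [antiDiagExp_apply hjl]
    split_ifs <;> subst_vars <;> omega

end Minor

section Order

variable {a b n i : ℕ}

lemma rankv_injective : Function.Injective (rankv n i) := by
  intro m m' h
  unfold rankv at h
  have := m.2; have := m'.2
  ext
  split_ifs at h <;> omega

lemma prec_asymm {u v : Fin n → ℕ} (h : prec a b n i u v) : ¬ prec a b n i v u := by
  rintro (h' | ⟨h'e, m', hm', hlow'⟩) <;> rcases h with h | ⟨he, m, hm, hlow⟩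
  any_goals omega
  rcases lt_trichotomy (rankv n i m) (rankv n i m') with hr | hr | hr
  · have := hlow' m hr; omega
  · have := rankv_injective hr; subst this; omega
  · have := hlow m' hr; omega

lemma aseq_succ_sub {p : ℕ} (hp : 1 ≤ p) :
    (aseq a b n (p + 1) : ℤ) - b * aseq a b n p = a + (1 - b) * rep b n := by
  obtain ⟨p, rfl⟩ : ∃ q, p = q + 1 := ⟨p - 1, by omega⟩
  simp only [aseq, rep, Nat.add_sub_cancel, geom_sum_succ]
  push_cast
  ring

lemma wdeg_eq_of_potential {u v : Fin n → ℕ} {z : ℕ → ℤ} (hz : IsPotential n z)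
    (h : ∀ m : Fin n, (u m : ℤ) - v m = expDiff b z (m + 1)) :
    wdeg a b n u = wdeg a b n v := by
  suffices (wdeg a b n u : ℤ) - wdeg a b n v = 0 by omega
  simp only [wdeg, Nat.cast_sum, Nat.cast_mul, ← Finset.sum_sub_distrib, ← sub_mul, h]
  rw [Fin.sum_univ_eq_sum_range (fun m => expDiff b z (m + 1) * (aseq a b n (m + 1) : ℤ))]
  exact sum_expDiff_mul_eq_zero (A := fun p => (aseq a b n p : ℤ)) hz
    fun p hp => aseq_succ_sub hp

lemma prec_trailExp_leadExp {j l : ℕ} (hb : 1 ≤ b) (hj : 1 ≤ j) (hjl : j < l)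
    (hl : l ≤ n - 1) : prec a b n i (trailExp b n i j l) (leadExp b n i j l) := by
  have hw : wdeg a b n (antiDiagExp b n j l) = wdeg a b n (diagExp b n j l) :=
    wdeg_eq_of_potential (isPotential_indicator hj hl) (antiDiagExp_sub_diagExp hj hjl)
  unfold trailExp leadExp
  -- the witness `p` is the `≺_i`-smallest variable occurring in the minor
  split_ifs
  · obtain ⟨p, hp⟩ : ∃ p, p = if i = l then l - 1 else j := ⟨_, rfl⟩
    refine Or.inr ⟨hw, ⟨p, by rw [hp]; split_ifs <;> omega⟩, ?_, fun m hm => ?_⟩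
    · simp only [antiDiagExp_apply hjl, diagExp_apply hj]; split_ifs at hp ⊢ <;> omega
    · simp only [rankv, antiDiagExp_apply hjl, diagExp_apply hj] at hm ⊢
      split_ifs at hp hm ⊢ <;> omega
  · obtain ⟨p, hp⟩ : ∃ p, p = if i = j then j - 1 else l := ⟨_, rfl⟩
    refine Or.inr ⟨hw.symm, ⟨p, by rw [hp]; split_ifs <;> omega⟩, ?_, fun m hm => ?_⟩
    · simp only [antiDiagExp_apply hjl, diagExp_apply hj]; split_ifs at hp ⊢ <;> omega
    · simp only [rankv, antiDiagExp_apply hjl, diagExp_apply hj] at hm ⊢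
      split_ifs at hp hm ⊢ <;> omega

lemma eq_leadExp_of_isLead {K : Type*} [Field K] {j l : ℕ} (hb : 1 ≤ b) (hj : 1 ≤ j)
    (hjl : j < l) (hl : l ≤ n - 1) {w : Fin n →₀ ℕ}
    (hw : IsLead a b n i (xv K n (j + 1) * xv K n l ^ b - xv K n j ^ b * xv K n (l + 1)) w) :
    w = leadExp b n i j l := by
  rw [minor_eq K hjl hl] at hw
  obtain ⟨hwS, hwlead⟩ := hw
  have hmem : ∀ w, w ∈ (monomial (antiDiagExp b n j l) (1 : K) -
      monomial (diagExp b n j l) 1).support ↔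
        w = leadExp b n i j l ∨ w = trailExp b n i j l := by
    intro w
    rw [mem_support_monomial_sub_monomial (antiDiagExp_ne_diagExp hj hjl hl)]
    unfold leadExp trailExp
    split_ifs <;> simp [or_comm]
  by_contra hne
  obtain rfl := ((hmem w).1 hwS).resolve_left hne
  exact prec_asymm (prec_trailExp_leadExp hb hj hjl hl)
    (hwlead _ ((hmem _).2 (Or.inl rfl)) (Ne.symm hne))

end Order

def minorLattice (b n : ℕ) : Submodule ℤ (Fin n → ℤ) :=
  Submodule.span ℤ {d | ∃ j l, 1 ≤ j ∧ j < l ∧ l ≤ n - 1 ∧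
    d = fun m => (antiDiagExp b n j l m : ℤ) - diagExp b n j l m}

noncomputable def minorGrading (b n : ℕ) :
    (Fin n →₀ ℕ) →+ (Fin n → ℤ) ⧸ minorLattice b n :=
  (minorLattice b n).mkQ.toAddMonoidHom.comp
    (Finsupp.coeFnAddHom.comp (Finsupp.mapRange.addMonoidHom (Nat.castAddMonoidHom ℤ)))

section Lattice

variable {b n : ℕ}

lemma exists_potential_of_mem_minorLattice {d : Fin n → ℤ} (hd : d ∈ minorLattice b n) :
    ∃ z, IsPotential n z ∧ ∀ m : Fin n, d m = expDiff b z (m + 1) := by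
  induction hd using Submodule.span_induction with
  | mem d hd =>
    obtain ⟨j, l, hj, hjl, hl, rfl⟩ := hd
    exact ⟨_, isPotential_indicator hj hl, antiDiagExp_sub_diagExp hj hjl⟩
  | zero => exact ⟨0, ⟨rfl, fun _ _ => rfl⟩, fun m => by simp [expDiff, jump]⟩
  | add d e _ _ hd he =>
    obtain ⟨z, hz, hdz⟩ := hd
    obtain ⟨z', hz', hez⟩ := he
    refine ⟨z + z', ⟨by simp [hz.1, hz'.1], fun k hk => by simp [hz.2 k hk, hz'.2 k hk]⟩,
      fun m => ?_⟩
    simp only [Pi.add_apply, hdz, hez, expDiff, jump]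
    ring
  | smul c d _ hd =>
    obtain ⟨z, hz, hdz⟩ := hd
    refine ⟨c • z, ⟨by simp [hz.1], fun k hk => by simp [hz.2 k hk]⟩, fun m => ?_⟩
    simp only [Pi.smul_apply, smul_eq_mul, hdz, expDiff, jump]
    ring

lemma sub_mem_minorLattice_of_minorGrading_eq {u v : Fin n →₀ ℕ}
    (h : minorGrading b n u = minorGrading b n v) :
    (fun m => (u m : ℤ) - v m) ∈ minorLattice b n := by
  simp only [minorGrading, AddMonoidHom.coe_comp, Function.comp_apply,
    LinearMap.toAddMonoidHom_coe, Submodule.mkQ_apply, Submodule.Quotient.eq] at h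
  convert h using 1
  ext m
  simp

lemma exists_eq_monomial_sub_monomial_of_mem_minorsY (K : Type*) [Field K] :
    ∀ g ∈ minorsY K b n, ∃ α β, minorGrading b n α = minorGrading b n β ∧
      g = monomial α 1 - monomial β 1 := by
  rintro g ⟨j, l, hj, hjl, hl, rfl⟩
  refine ⟨antiDiagExp b n j l, diagExp b n j l, ?_, minor_eq K hjl hl⟩
  simp only [minorGrading, AddMonoidHom.coe_comp, Function.comp_apply,
    LinearMap.toAddMonoidHom_coe, Submodule.mkQ_apply, Submodule.Quotient.eq]
  exact Submodule.subset_span ⟨j, l, hj, hjl, hl, by ext; simp⟩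

end Lattice

end GroebnerMinors

open GroebnerMinors

theorem stmt7_general (a b n : ℕ) (hb : 0 < b)
    (i : ℕ) (hi1 : 1 ≤ i) (hi2 : i ≤ n) (K : Type*) [Field K]
    (f : MvPolynomial (Fin n) K) (hf : f ∈ Ideal.span (minorsY K b n))
    (u : Fin n →₀ ℕ) (hu : IsLead a b n i f u) :
    ∃ j l : ℕ, 1 ≤ j ∧ j < l ∧ l ≤ n - 1 ∧
      ∀ w : Fin n →₀ ℕ,
        IsLead a b n i (xv K n (j + 1) * xv K n l ^ b - xv K n j ^ b * xv K n (l + 1)) w →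
          ∀ m : Fin n, w m ≤ u m := by
  obtain ⟨v, hv, hvu, hgr⟩ := MvPolynomial.exists_mem_support_ne_of_mem_span_binomials
    (minorGrading b n) (exists_eq_monomial_sub_monomial_of_mem_minorsY K) hf hu.1
  obtain ⟨z, hz, hd⟩ := exists_potential_of_mem_minorLattice
    (sub_mem_minorLattice_of_minorGrading_eq hgr.symm)
  obtain ⟨m, hm, hlow⟩ := ((hu.2 v hv hvu).resolve_left
    (by rw [wdeg_eq_of_potential (a := a) hz hd]; exact lt_irrefl _)).2
  beta_reduce at hm hlow
  obtain ⟨j, l, hj, hjl, hl, hlead⟩ := exists_leadLE hb hi1 hi2 hz (ps := m + 1) m.2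
    (by rw [← hd m]; omega) fun q hq1 hqn hq => by
      obtain ⟨q, rfl⟩ : ∃ q', q = q' + 1 := ⟨q - 1, by omega⟩
      rw [← hd ⟨q, by omega⟩, hlow ⟨q, by omega⟩ hq, sub_self]
  refine ⟨j, l, hj, hjl, hl, fun w hw => ?_⟩
  rw [eq_leadExp_of_isLead hb hj hjl hl hw]
  exact leadExp_le hj hjl (fun m => by rw [← hd m]; omega) hlead

theorem stmt7 (a b n : ℕ) (ha : 0 < a) (hb : 0 < b) (hn : 3 < n)
    (i : ℕ) (hi1 : 1 ≤ i) (hi2 : i ≤ n) (K : Type*) [Field K]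
    (f : MvPolynomial (Fin n) K) (hf : f ∈ Ideal.span (minorsY K b n)) (hf0 : f ≠ 0)
    (u : Fin n →₀ ℕ) (hu : IsLead a b n i f u) :
    ∃ j l : ℕ, 1 ≤ j ∧ j < l ∧ l ≤ n - 1 ∧
      ∀ w : Fin n →₀ ℕ,
        IsLead a b n i (xv K n (j + 1) * xv K n l ^ b - xv K n j ^ b * xv K n (l + 1)) w →
          ∀ m : Fin n, w m ≤ u m :=
  stmt7_general a b n hb i hi1 hi2 K f hf u hu
end
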